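/- arXiv:2306.05015 — 2 statements merged into one kernel-verified Lean document; each statement's English description precedes it below -/
import Mathlib

section
/- Let 0 < ε < c < 1 and for each n = 0, 1, 2, … let F_n be a family of pairwise disjoint squares in D satisfying: (a) F_0 = {Q_0}; (b) if Q ∈ F_{n+1} then there exists Q̃ ∈ F_n with Q ⊂ Q̃ and μ(Q) ≤ ε μ(Q̃); (c) if Q ∈ F_n then Σ_{R ⊂ Q, R ∈ F_{n+1}} μ(R) ≥ c μ(Q). Let E = ∩_n ∪_{Q ∈ F_n} Q. Then the Hausdorff dimension of E is at least 1 − log c / log ε. -/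
/-!
Fix `c' ∈ (ε, c)` and put `s = 1 - log c' / log ε`, so that `ε ^ (1 - s) = c'`. Since `c' < c`,
every square of `F n` has finitely many children in `F (n + 1)` carrying a `c'`-fraction of its
mass, which gives finite subfamilies `G n ⊆ F n` forming a tree. Pushing mass down this tree in
proportion to `μ` gives probability measures `ν n` on `⋃ G n` with `ν n P ≤ c'⁻ⁿ μ P ≤ (μ P) ^ s`
for `P ∈ G n`, because `μ P ≤ εⁿ`. As squares of `D` are nested or disjoint, this becomes
`ν n S ≤ c'⁻¹ (μ S) ^ s` for every `S ∈ D`. A ball of radius `ρ` meets `K` inside a single square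
of side comparable to `ρ`, and `μ S = 4⁻ᵏ` is at most the side of `S`, so `ν n (B(x, ρ)) ≲ ρ ^ s`.
In the mass distribution principle no weak limit of the `ν n` is needed: an open cover of the
compact set `⋂ₙ ⋃ G n` already covers some `⋃ G N`, which has `ν N`-mass one. Hence
`𝓗ˢ(E) > 0`, and letting `c' ↑ c` finishes the proof.
-/

open MeasureTheory Filter Set Topology
open scoped ENNReal

noncomputable section

/-- Side length of generation-`n` squares: `s n = λ₁ ⋯ λₙ` (here `Λ k` is `λ_{k+1}`). -/
def sideLen (Λ : ℕ → ℝ) (n : ℕ) : ℝ := ∏ k ∈ Finset.range n, Λ k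

/-- Lower-left corner of the generation-`n` square encoded by the word `w`. -/
def cornerPt (Λ : ℕ → ℝ) (w : ℕ → Bool × Bool) (n : ℕ) : ℂ :=
  ∑ k ∈ Finset.range n,
    (((if (w k).1 then sideLen Λ k - sideLen Λ (k + 1) else 0 : ℝ) : ℂ) +
      ((if (w k).2 then sideLen Λ k - sideLen Λ (k + 1) else 0 : ℝ) : ℂ) * Complex.I)

/-- The (closed) generation-`n` square encoded by the word `w`. -/
def cSquare (Λ : ℕ → ℝ) (w : ℕ → Bool × Bool) (n : ℕ) : Set ℂ :=
  {z : ℂ | (cornerPt Λ w n).re ≤ z.re ∧ z.re ≤ (cornerPt Λ w n).re + sideLen Λ n ∧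
    (cornerPt Λ w n).im ≤ z.im ∧ z.im ≤ (cornerPt Λ w n).im + sideLen Λ n}

/-- The family `𝒟_n` of generation-`n` squares. -/
def genSq (Λ : ℕ → ℝ) (n : ℕ) : Set (Set ℂ) := {Q | ∃ w, Q = cSquare Λ w n}

/-- The planar Cantor set `K = ⋂ₙ ⋃ⱼ Qⱼⁿ`. -/
def cantorK (Λ : ℕ → ℝ) : Set ℂ := ⋂ n, ⋃ w : ℕ → Bool × Bool, cSquare Λ w n

/-- The linear density `a_n = 4^{-n}/s_n` at generation `n`. -/
def linDensity (Λ : ℕ → ℝ) (n : ℕ) : ℝ := 1 / (4 ^ n * sideLen Λ n)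

open Metric

lemma ENNReal.rpow_div_mul_le_rpow {a b : ℝ≥0∞} {s : ℝ} (hs : s ≤ 1) (hab : a ≤ b)
    (hb₀ : b ≠ 0) (hb : b ≠ ∞) : b ^ s / b * a ≤ a ^ s := by
  rcases eq_or_ne a 0 with rfl | ha₀
  · simp
  have ha : a ≠ ∞ := ne_top_of_le_ne_top hb hab
  have key : ∀ x : ℝ≥0∞, x ≠ 0 → x ≠ ∞ → x ^ s / x = (x ^ (1 - s))⁻¹ := fun x hx₀ hx => by
    rw [← ENNReal.rpow_neg, neg_sub, ENNReal.rpow_sub _ _ hx₀ hx, ENNReal.rpow_one]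
  calc b ^ s / b * a = a / b ^ (1 - s) := by rw [key b hb₀ hb, mul_comm, div_eq_mul_inv]
    _ ≤ a / a ^ (1 - s) := by gcongr
    _ = a ^ s := by rw [div_eq_mul_inv, ← key a ha₀ ha, mul_comm, ENNReal.div_mul_cancel ha₀ ha]

lemma ENNReal.exists_finset_lt_sum_of_lt_tsum {α : Type*} {f : α → ℝ≥0∞} {F : Set α}
    {a : ℝ≥0∞} (h : a < ∑' x : F, f x) : ∃ t : Finset α, ↑t ⊆ F ∧ a < ∑ x ∈ t, f x := by
  rw [ENNReal.tsum_eq_iSup_sum, lt_iSup_iff] at h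
  obtain ⟨u, hu⟩ := h
  refine ⟨u.map (Function.Embedding.subtype _), fun x hx => ?_, by rwa [Finset.sum_map]⟩
  obtain ⟨x', -, rfl⟩ := Finset.mem_map.mp hx
  exact x'.2

section StoppingTree

variable {X : Type*} [MeasurableSpace X]

def levelUnion (G : ℕ → Finset (Set X)) (n : ℕ) : Set X := ⋃ P ∈ G n, P

def frostmanMeasure (μ : Measure X) (G : ℕ → Finset (Set X)) : ℕ → Measure X
  | 0 => μ.restrict (levelUnion G 0)
  | n + 1 => ∑ P ∈ G n, (frostmanMeasure μ G n P / μ (P ∩ levelUnion G (n + 1))) •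
      μ.restrict (P ∩ levelUnion G (n + 1))

structure IsStoppingTree (μ : Measure X) (G : ℕ → Finset (Set X)) (ε c : ℝ≥0∞) : Prop where
  measurableSet : ∀ n, ∀ P ∈ G n, MeasurableSet P
  pairwiseDisjoint : ∀ n, (G n : Set (Set X)).PairwiseDisjoint id
  exists_parent : ∀ n, ∀ R ∈ G (n + 1), ∃ P ∈ G n, R ⊆ P
  measure_ne_zero : ∀ n, ∀ P ∈ G n, μ P ≠ 0
  measure_le : ∀ n, ∀ P ∈ G n, μ P ≤ ε ^ n
  mul_measure_le : ∀ n, ∀ P ∈ G n, c * μ P ≤ μ (P ∩ levelUnion G (n + 1))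

variable {μ : Measure X}

lemma measure_le_pow_of_forall_exists_superset {F : ℕ → Set (Set X)} {ε : ℝ≥0∞}
    (h₀ : ∀ Q ∈ F 0, μ Q ≤ 1) (hb : ∀ n, ∀ Q ∈ F (n + 1), ∃ Q' ∈ F n, Q ⊆ Q' ∧ μ Q ≤ ε * μ Q') :
    ∀ n, ∀ Q ∈ F n, μ Q ≤ ε ^ n := by
  intro n
  induction n with
  | zero => simpa using h₀
  | succ n ih =>
    intro Q hQ
    obtain ⟨Q', hQ', -, hQQ'⟩ := hb n Q hQ
    calc μ Q ≤ ε * μ Q' := hQQ'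
      _ ≤ ε * ε ^ n := by gcongr; exact ih Q' hQ'
      _ = ε ^ (n + 1) := (pow_succ' ε n).symm

theorem exists_isStoppingTree [IsFiniteMeasure μ] {F : ℕ → Set (Set X)} {ε c c' : ℝ≥0∞}
    (hmeas : ∀ n, ∀ Q ∈ F n, MeasurableSet Q) (hpos : ∀ n, ∀ Q ∈ F n, μ Q ≠ 0)
    (hdisj : ∀ n, (F n).PairwiseDisjoint id) (hF₀ : (F 0).Finite)
    (hε : ∀ n, ∀ Q ∈ F n, μ Q ≤ ε ^ n)
    (hc : ∀ n, ∀ Q ∈ F n, c * μ Q ≤ ∑' R : {R : Set X // R ∈ F (n + 1) ∧ R ⊆ Q}, μ R)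
    (hc' : c' < c) :
    ∃ G : ℕ → Finset (Set X), IsStoppingTree μ G ε c' ∧ (∀ n, ∀ P ∈ G n, P ∈ F n) ∧
      (G 0 : Set (Set X)) = F 0 := by
  have hchildren : ∀ n, ∀ Q ∈ F n, ∃ t : Finset (Set X),
      ↑t ⊆ {R | R ∈ F (n + 1) ∧ R ⊆ Q} ∧ c' * μ Q < ∑ R ∈ t, μ R := fun n Q hQ =>
    ENNReal.exists_finset_lt_sum_of_lt_tsum <|
      (ENNReal.mul_lt_mul_left (hpos n Q hQ) (measure_ne_top _ _) hc').trans_le (hc n Q hQ)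
  choose! t ht using hchildren
  let G : ℕ → Finset (Set X) := fun n => Nat.rec hF₀.toFinset (fun k Gk => Gk.biUnion (t k)) n
  have hG : ∀ n, G (n + 1) = (G n).biUnion (t n) := fun n => rfl
  have hGF : ∀ n, ∀ P ∈ G n, P ∈ F n := by
    intro n
    induction n with
    | zero => simp [G]
    | succ n ih =>
      intro R hR
      obtain ⟨P, hP, hRP⟩ := Finset.mem_biUnion.mp (hG n ▸ hR)
      exact ((ht n P (ih P hP)).1 hRP).1
  refine ⟨G, ⟨fun n P hP => hmeas n P (hGF n P hP), fun n => (hdisj n).subset (hGF n),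
    fun n R hR => ?_, fun n P hP => hpos n P (hGF n P hP), fun n P hP => hε n P (hGF n P hP),
    fun n P hP => ?_⟩, hGF, by simp [G]⟩
  · obtain ⟨P, hP, hRP⟩ := Finset.mem_biUnion.mp (hG n ▸ hR)
    exact ⟨P, hP, ((ht n P (hGF n P hP)).1 hRP).2⟩
  · have htP := (ht n P (hGF n P hP)).1
    calc c' * μ P ≤ ∑ R ∈ t n P, μ R := (ht n P (hGF n P hP)).2.le
      _ = μ (⋃ R ∈ t n P, R) := (measure_biUnion_finset (f := id)
          ((hdisj (n + 1)).subset fun R hR => (htP hR).1) fun R hR => hmeas _ R (htP hR).1).symm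
      _ ≤ μ (P ∩ levelUnion G (n + 1)) := measure_mono <| iUnion₂_subset fun R hR =>
          subset_inter (htP hR).2 <| subset_biUnion_of_mem (u := id)
            (hG n ▸ Finset.mem_biUnion.mpr ⟨P, hP, hR⟩)

namespace IsStoppingTree

variable {G : ℕ → Finset (Set X)} {ε c : ℝ≥0∞}

lemma measurableSet_levelUnion (hG : IsStoppingTree μ G ε c) (n : ℕ) :
    MeasurableSet (levelUnion G n) :=
  Finset.measurableSet_biUnion _ (hG.measurableSet n)

lemma frostmanMeasure_succ_apply (hG : IsStoppingTree μ G ε c) (n : ℕ) (A : Set X) :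
    frostmanMeasure μ G (n + 1) A = ∑ P ∈ G n, frostmanMeasure μ G n P /
      μ (P ∩ levelUnion G (n + 1)) * μ (A ∩ (P ∩ levelUnion G (n + 1))) := by
  simp only [frostmanMeasure, Measure.coe_finsetSum, Finset.sum_apply, Measure.smul_apply,
    smul_eq_mul]
  refine Finset.sum_congr rfl fun P hP => ?_
  rw [Measure.restrict_apply' ((hG.measurableSet n P hP).inter (hG.measurableSet_levelUnion _))]

lemma frostmanMeasure_absolutelyContinuous (hG : IsStoppingTree μ G ε c) (n : ℕ) :
    frostmanMeasure μ G n ≪ μ := by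
  intro A hA
  cases n with
  | zero => exact Measure.absolutelyContinuous_of_le Measure.restrict_le_self hA
  | succ n =>
    rw [hG.frostmanMeasure_succ_apply]
    exact Finset.sum_eq_zero fun P _ => by rw [measure_mono_null inter_subset_left hA, mul_zero]

lemma frostmanMeasure_levelUnion [IsFiniteMeasure μ] (hG : IsStoppingTree μ G ε c)
    (hc : c ≠ 0) (n : ℕ) : frostmanMeasure μ G n (levelUnion G n) = μ (levelUnion G 0) := by
  induction n with
  | zero => exact Measure.restrict_apply_self _ _
  | succ n ih =>
    rw [hG.frostmanMeasure_succ_apply, ← ih, show levelUnion G n = ⋃ P ∈ G n, id P from rfl,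
      measure_biUnion_finset (hG.pairwiseDisjoint n) (hG.measurableSet n)]
    refine Finset.sum_congr rfl fun P hP => ?_
    have hPL : μ (P ∩ levelUnion G (n + 1)) ≠ 0 := fun h0 => by
      simpa [h0, hc, hG.measure_ne_zero n P hP] using hG.mul_measure_le n P hP
    rw [inter_eq_right.mpr inter_subset_right,
      ENNReal.div_mul_cancel hPL (measure_ne_top _ _), id]

lemma frostmanMeasure_succ_le_of_subset [IsFiniteMeasure μ] (hG : IsStoppingTree μ G ε c)
    {n : ℕ} {P A : Set X} (hP : P ∈ G n) (hAP : A ⊆ P) :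
    frostmanMeasure μ G (n + 1) A ≤ c⁻¹ * (frostmanMeasure μ G n P / μ P) * μ A := by
  rw [hG.frostmanMeasure_succ_apply, Finset.sum_eq_single_of_mem P hP fun P' hP' hne => ?_]
  · calc frostmanMeasure μ G n P / μ (P ∩ levelUnion G (n + 1)) *
          μ (A ∩ (P ∩ levelUnion G (n + 1)))
        ≤ frostmanMeasure μ G n P / (c * μ P) * μ A := by
          gcongr
          · exact hG.mul_measure_le n P hP
          · exact inter_subset_left
      _ = c⁻¹ * (frostmanMeasure μ G n P / μ P) * μ A := by
          rw [div_eq_mul_inv, ENNReal.mul_inv (.inr (measure_ne_top _ _))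
            (.inr (hG.measure_ne_zero n P hP)), div_eq_mul_inv]
          ring
  · have : A ∩ P' = ∅ :=
      subset_empty_iff.mp fun x hx => (hG.pairwiseDisjoint n hP' hP hne).le_bot ⟨hx.2, hAP hx.1⟩
    rw [← inter_assoc, this, empty_inter, measure_empty, mul_zero]

lemma frostmanMeasure_succ_le_self (hG : IsStoppingTree μ G ε c) {n : ℕ} {S : Set X}
    (hS : ∀ P ∈ G n, P ⊆ S ∨ Disjoint P S) :
    frostmanMeasure μ G (n + 1) S ≤ frostmanMeasure μ G n S := by
  classical
  calc frostmanMeasure μ G (n + 1) S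
      ≤ ∑ P ∈ G n, if P ⊆ S then frostmanMeasure μ G n P else 0 := by
        rw [hG.frostmanMeasure_succ_apply]
        refine Finset.sum_le_sum fun P hP => ?_
        rcases hS P hP with hPS | hPS
        · rw [if_pos hPS]
          calc _ ≤ frostmanMeasure μ G n P / μ (P ∩ levelUnion G (n + 1)) *
                μ (P ∩ levelUnion G (n + 1)) := mul_le_mul_right (measure_mono inter_subset_right) _
            _ ≤ frostmanMeasure μ G n P := by rw [mul_comm]; exact ENNReal.mul_div_le
        · rw [← inter_assoc, inter_comm S, (disjoint_iff_inter_eq_empty.mp hPS), empty_inter,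
            measure_empty, mul_zero]
          exact bot_le
    _ = frostmanMeasure μ G n (⋃ P ∈ (G n).filter (· ⊆ S), P) := by
        rw [← Finset.sum_filter]
        exact (measure_biUnion_finset (f := id)
          ((hG.pairwiseDisjoint n).subset (Finset.coe_subset.mpr (Finset.filter_subset _ _)))
          fun P hP => hG.measurableSet n P (Finset.mem_filter.mp hP).1).symm
    _ ≤ frostmanMeasure μ G n S :=
        measure_mono (iUnion₂_subset fun P hP => (Finset.mem_filter.mp hP).2)

lemma frostmanMeasure_le_inv_pow_mul [IsFiniteMeasure μ] (hG : IsStoppingTree μ G ε c)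
    {n : ℕ} {P : Set X} (hP : P ∈ G n) : frostmanMeasure μ G n P ≤ c⁻¹ ^ n * μ P := by
  induction n generalizing P with
  | zero => simpa [frostmanMeasure] using Measure.restrict_apply_le _ P
  | succ n ih =>
    obtain ⟨Q, hQ, hPQ⟩ := hG.exists_parent n P hP
    calc frostmanMeasure μ G (n + 1) P ≤ c⁻¹ * (frostmanMeasure μ G n Q / μ Q) * μ P :=
          hG.frostmanMeasure_succ_le_of_subset hQ hPQ
      _ ≤ c⁻¹ * (c⁻¹ ^ n * μ Q / μ Q) * μ P := by gcongr; exact ih hQ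
      _ = c⁻¹ ^ (n + 1) * μ P := by
          rw [ENNReal.mul_div_cancel_right (hG.measure_ne_zero n Q hQ) (measure_ne_top _ _),
            pow_succ']

lemma frostmanMeasure_le_rpow [IsFiniteMeasure μ] (hG : IsStoppingTree μ G ε c) (hc₀ : c ≠ 0)
    (hc : c ≠ ∞) {s : ℝ} (hs : s ≤ 1) (hεc : ε ^ (1 - s) ≤ c) {n : ℕ} {P : Set X}
    (hP : P ∈ G n) : frostmanMeasure μ G n P ≤ μ P ^ s := by
  calc frostmanMeasure μ G n P ≤ c⁻¹ ^ n * μ P := hG.frostmanMeasure_le_inv_pow_mul hP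
    _ = c⁻¹ ^ n * (μ P ^ (1 - s) * μ P ^ s) := by
        rw [← ENNReal.rpow_add _ _ (hG.measure_ne_zero n P hP) (measure_ne_top _ _),
          sub_add_cancel, ENNReal.rpow_one]
    _ ≤ c⁻¹ ^ n * ((ε ^ n) ^ (1 - s) * μ P ^ s) := by
        gcongr
        exact hG.measure_le n P hP
    _ ≤ c⁻¹ ^ n * (c ^ n * μ P ^ s) := by
        have : (ε ^ n) ^ (1 - s) = (ε ^ (1 - s)) ^ n := by
          rw [← ENNReal.rpow_natCast, ← ENNReal.rpow_natCast (ε ^ (1 - s)), ← ENNReal.rpow_mul,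
            ← ENNReal.rpow_mul, mul_comm]
        rw [this]
        gcongr
    _ = μ P ^ s := by rw [← mul_assoc, ← mul_pow, ENNReal.inv_mul_cancel hc₀ hc, one_pow, one_mul]

theorem frostmanMeasure_le_rpow_of_nested [IsProbabilityMeasure μ] (hG : IsStoppingTree μ G ε c)
    (hc₀ : c ≠ 0) (hc : c ≤ 1) {s : ℝ} (hs : s ≤ 1) (hεc : ε ^ (1 - s) ≤ c) {S : Set X}
    (hS : ∀ n, ∀ P ∈ G n, P ⊆ S ∨ S ⊆ P ∨ Disjoint P S) (n : ℕ) :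
    frostmanMeasure μ G n S ≤ c⁻¹ * μ S ^ s := by
  induction n with
  | zero =>
    calc frostmanMeasure μ G 0 S ≤ μ S := Measure.restrict_apply_le _ S
      _ ≤ μ S ^ s := by
          simpa using ENNReal.rpow_le_rpow_of_exponent_ge (prob_le_one (s := S)) hs
      _ ≤ c⁻¹ * μ S ^ s := le_mul_of_one_le_left' (ENNReal.one_le_inv.mpr hc)
  | succ n ih =>
    by_cases hcompat : ∀ P ∈ G n, P ⊆ S ∨ Disjoint P S
    · exact (hG.frostmanMeasure_succ_le_self hcompat).trans ih
    push Not at hcompat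
    obtain ⟨P, hP, hPS, hPS'⟩ := hcompat
    have hSP : S ⊆ P := ((hS n P hP).resolve_left hPS).resolve_right hPS'
    calc frostmanMeasure μ G (n + 1) S ≤ c⁻¹ * (frostmanMeasure μ G n P / μ P) * μ S :=
          hG.frostmanMeasure_succ_le_of_subset hP hSP
      _ ≤ c⁻¹ * (μ P ^ s / μ P) * μ S := by
          gcongr
          exact hG.frostmanMeasure_le_rpow hc₀ (ne_top_of_le_ne_top ENNReal.one_ne_top hc) hs hεc hP
      _ ≤ c⁻¹ * μ S ^ s := by
          rw [mul_assoc]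
          gcongr
          exact ENNReal.rpow_div_mul_le_rpow hs (measure_mono hSP) (hG.measure_ne_zero n P hP)
            (measure_ne_top _ _)

end IsStoppingTree

end StoppingTree

section MassDistribution

variable {X : Type*} [MetricSpace X] [MeasurableSpace X]

lemma exists_isOpen_superset_measure_le {ν : ℕ → Measure X} {s : ℝ} (hs : 0 < s) {C : ℝ≥0∞}
    {r₀ : ℝ} (hball : ∀ n x ρ, 0 < ρ → ρ < r₀ → ν n (ball x ρ) ≤ C * ENNReal.ofReal ρ ^ s)
    {A : Set X} (hA : ediam A < ENNReal.ofReal r₀) {η : ℝ≥0∞} (hη : η ≠ 0) :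
    ∃ U, IsOpen U ∧ A ⊆ U ∧ ∀ n, ν n U ≤ C * ((⨆ _ : A.Nonempty, ediam A ^ s) + η) := by
  rcases A.eq_empty_or_nonempty with rfl | ⟨x, hx⟩
  · exact ⟨∅, isOpen_empty, subset_rfl, fun n => by simp⟩
  have hd : ediam A ≠ ∞ := hA.ne_top
  have hcont : Tendsto (fun ρ : ℝ => ENNReal.ofReal ρ ^ s) (𝓝 (ediam A).toReal)
      (𝓝 (ediam A ^ s)) := by
    have h := ((ENNReal.continuous_rpow_const (y := s)).comp ENNReal.continuous_ofReal).tendsto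
      (ediam A).toReal
    rwa [Function.comp_apply, ENNReal.ofReal_toReal hd] at h
  have hev : ∀ᶠ ρ in 𝓝[>] (ediam A).toReal, (ENNReal.ofReal ρ ^ s < ediam A ^ s + η ∧ ρ < r₀)
      ∧ (ediam A).toReal < ρ :=
    ((hcont.eventually (gt_mem_nhds (ENNReal.lt_add_right
      (ENNReal.rpow_ne_top_of_nonneg hs.le hd) hη))).and
      (gt_mem_nhds (ENNReal.toReal_lt_of_lt_ofReal hA))).filter_mono nhdsWithin_le_nhds
      |>.and self_mem_nhdsWithin
  obtain ⟨ρ, ⟨hρs, hρr₀⟩, hdρ⟩ := hev.exists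
  have hρ : 0 < ρ := ENNReal.toReal_nonneg.trans_lt hdρ
  refine ⟨ball x ρ, isOpen_ball, fun y hy => ?_, fun n => ?_⟩
  · rw [mem_ball, dist_edist]
    exact (ENNReal.toReal_mono hd (edist_le_ediam_of_mem hy hx)).trans_lt hdρ
  · calc ν n (ball x ρ) ≤ C * ENNReal.ofReal ρ ^ s := hball n x ρ hρ hρr₀
      _ ≤ C * ((⨆ _ : A.Nonempty, ediam A ^ s) + η) := by
          rw [iSup_pos ⟨x, hx⟩]
          gcongr

theorem inv_le_hausdorffMeasure_iInter [BorelSpace X] {K : ℕ → Set X}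
    (hKc : ∀ n, IsCompact (K n)) (hK : Antitone K) {ν : ℕ → Measure X}
    (hνK : ∀ n, 1 ≤ ν n (K n)) {s : ℝ} (hs : 0 < s)
    {C : ℝ≥0∞} {r₀ : ℝ} (hr₀ : 0 < r₀)
    (hball : ∀ n x ρ, 0 < ρ → ρ < r₀ → ν n (ball x ρ) ≤ C * ENNReal.ofReal ρ ^ s) :
    C⁻¹ ≤ μH[s] (⋂ n, K n) := by
  rw [Measure.hausdorffMeasure_apply]
  refine le_iSup₂_of_le (ENNReal.ofReal (r₀ / 2)) (ENNReal.ofReal_pos.mpr (half_pos hr₀)) <|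
    le_iInf₂ fun t ht => le_iInf fun htr => ENNReal.le_of_forall_pos_le_add fun δ hδ _ => ?_
  obtain ⟨η, hη, hηδ⟩ := ENNReal.exists_pos_sum_of_countable (ENNReal.coe_ne_zero.mpr hδ.ne') ℕ
  choose U hUo htU hUν using fun i => exists_isOpen_superset_measure_le hs hball
    ((htr i).trans_lt (ENNReal.ofReal_lt_ofReal_iff hr₀ |>.mpr (half_lt_self hr₀)))
    (ENNReal.coe_ne_zero.mpr (hη i).ne')
  obtain ⟨N, hN⟩ : ∃ N, K N ⊆ ⋃ i, U i :=
    exists_subset_nhds_of_isCompact' hK.directed_ge hKc (fun n => (hKc n).isClosed)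
      fun x hx => (isOpen_iUnion hUo).mem_nhds (iUnion_mono htU (ht hx))
  have hmass : 1 ≤ C * ((∑' i, ⨆ _ : (t i).Nonempty, ediam (t i) ^ s) + δ) :=
    calc 1 ≤ ν N (⋃ i, U i) := (hνK N).trans (measure_mono hN)
      _ ≤ ∑' i, ν N (U i) := measure_iUnion_le _
      _ ≤ ∑' i, C * ((⨆ _ : (t i).Nonempty, ediam (t i) ^ s) + η i) :=
          ENNReal.tsum_le_tsum fun i => hUν i N
      _ ≤ C * ((∑' i, ⨆ _ : (t i).Nonempty, ediam (t i) ^ s) + δ) := by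
          rw [ENNReal.tsum_mul_left, ENNReal.tsum_add]
          gcongr
  refine (ENNReal.inv_le_iff_le_mul (fun _ hC => ?_) fun _ => ?_).mpr hmass
  · simp [hC] at hmass
  · exact ((ENNReal.coe_pos.mpr hδ).trans_le le_add_self).ne'

theorem le_dimH_iInter_of_measure_ball_le [BorelSpace X] {K : ℕ → Set X}
    (hKc : ∀ n, IsCompact (K n)) (hK : Antitone K) {ν : ℕ → Measure X}
    (hνK : ∀ n, 1 ≤ ν n (K n)) {s : ℝ} (hs : 0 < s)
    {C : ℝ≥0∞} (hC : C ≠ ∞) {r₀ : ℝ} (hr₀ : 0 < r₀)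
    (hball : ∀ n x ρ, 0 < ρ → ρ < r₀ → ν n (ball x ρ) ≤ C * ENNReal.ofReal ρ ^ s) :
    ENNReal.ofReal s ≤ dimH (⋂ n, K n) := by
  refine le_dimH_of_hausdorffMeasure_ne_zero (d := s.toNNReal) ?_
  rw [Real.coe_toNNReal _ hs.le]
  exact ((ENNReal.inv_pos.mpr hC).trans_le
    (inv_le_hausdorffMeasure_iInter hKc hK hνK hs hr₀ hball)).ne'

end MassDistribution

section CantorGeometry

variable {Λ : ℕ → ℝ} {lam : ℝ}

lemma sideLen_zero : sideLen Λ 0 = 1 := Finset.prod_range_zero _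

lemma sideLen_succ (n : ℕ) : sideLen Λ (n + 1) = sideLen Λ n * Λ n := Finset.prod_range_succ _ _

lemma sideLen_nonneg (h0 : ∀ n, 0 ≤ Λ n) (n : ℕ) : 0 ≤ sideLen Λ n :=
  Finset.prod_nonneg fun k _ => h0 k

lemma sideLen_succ_le (h0 : ∀ n, 0 ≤ Λ n) (hlam : ∀ n, Λ n ≤ lam) (n : ℕ) :
    sideLen Λ (n + 1) ≤ lam * sideLen Λ n := by
  rw [sideLen_succ, mul_comm]
  exact mul_le_mul_of_nonneg_right (hlam n) (sideLen_nonneg h0 n)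

lemma sideLen_antitone (h0 : ∀ n, 0 ≤ Λ n) (h1 : ∀ n, Λ n ≤ 1) : Antitone (sideLen Λ) :=
  antitone_nat_of_succ_le fun n => by
    rw [sideLen_succ]
    exact mul_le_of_le_one_right (sideLen_nonneg h0 n) (h1 n)

lemma inv_four_pow_le_sideLen (h4 : ∀ n, 1 / 4 ≤ Λ n) (n : ℕ) : (4⁻¹ : ℝ) ^ n ≤ sideLen Λ n := by
  simpa [sideLen] using Finset.prod_le_prod (s := Finset.range n) (fun _ _ => by norm_num)
    fun k _ => (one_div (4 : ℝ)).symm.trans_le (h4 k)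

lemma sideLen_le_pow (h0 : ∀ n, 0 ≤ Λ n) (hlam : ∀ n, Λ n ≤ lam) (n : ℕ) :
    sideLen Λ n ≤ lam ^ n := by
  simpa [sideLen] using Finset.prod_le_prod (s := Finset.range n) (fun k _ => h0 k)
    fun k _ => hlam k

lemma tendsto_sideLen_atTop_nhds_zero (h0 : ∀ n, 0 ≤ Λ n) (hlam : ∀ n, Λ n ≤ lam)
    (hlam1 : lam < 1) : Tendsto (sideLen Λ) atTop (𝓝 0) :=
  squeeze_zero (sideLen_nonneg h0) (sideLen_le_pow h0 hlam)
    (tendsto_pow_atTop_nhds_zero_of_lt_one ((h0 0).trans (hlam 0)) hlam1)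

lemma exists_sideLen_succ_le_lt (h0 : ∀ n, 0 ≤ Λ n) (hlam : ∀ n, Λ n ≤ lam) (hlam1 : lam < 1)
    {r : ℝ} (hr₀ : 0 < r) (hr₁ : r < 1) : ∃ k, sideLen Λ (k + 1) ≤ r ∧ r < sideLen Λ k := by
  classical
  have hex : ∃ j, sideLen Λ j ≤ r :=
    ((tendsto_sideLen_atTop_nhds_zero h0 hlam hlam1).eventually (ge_mem_nhds hr₀)).exists
  obtain ⟨k, hk⟩ : ∃ k, Nat.find hex = k + 1 := Nat.exists_eq_succ_of_ne_zero fun h => by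
    have := Nat.find_spec hex
    rw [h, sideLen_zero] at this
    linarith
  exact ⟨k, hk ▸ Nat.find_spec hex, not_le.mp (Nat.find_min hex (hk ▸ k.lt_succ_self))⟩

def cornerCoord (Λ : ℕ → ℝ) (b : ℕ → Bool) (n : ℕ) : ℝ :=
  ∑ k ∈ Finset.range n, if b k then sideLen Λ k - sideLen Λ (k + 1) else 0

def cantorInterval (Λ : ℕ → ℝ) (b : ℕ → Bool) (n : ℕ) : Set ℝ :=
  Icc (cornerCoord Λ b n) (cornerCoord Λ b n + sideLen Λ n)

lemma cornerCoord_succ (b : ℕ → Bool) (n : ℕ) : cornerCoord Λ b (n + 1) =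
    cornerCoord Λ b n + if b n then sideLen Λ n - sideLen Λ (n + 1) else 0 :=
  Finset.sum_range_succ _ _

lemma cornerCoord_congr {b b' : ℕ → Bool} {n : ℕ} (h : ∀ k < n, b k = b' k) :
    cornerCoord Λ b n = cornerCoord Λ b' n :=
  Finset.sum_congr rfl fun k hk => by rw [h k (Finset.mem_range.mp hk)]

lemma cSquare_eq_reProdIm (w : ℕ → Bool × Bool) (n : ℕ) : cSquare Λ w n =
    cantorInterval Λ (fun k => (w k).1) n ×ℂ cantorInterval Λ (fun k => (w k).2) n := by
  have hre : (cornerPt Λ w n).re = cornerCoord Λ (fun k => (w k).1) n := by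
    simp [cornerPt, cornerCoord, Complex.re_sum]
  have him : (cornerPt Λ w n).im = cornerCoord Λ (fun k => (w k).2) n := by
    simp [cornerPt, cornerCoord, Complex.im_sum]
  ext z
  simp only [cSquare, cantorInterval, Complex.mem_reProdIm, mem_Icc, mem_ofPred_eq, hre, him,
    and_assoc]

lemma cantorInterval_succ_subset (h0 : ∀ n, 0 ≤ Λ n) (h1 : ∀ n, Λ n ≤ 1) (b : ℕ → Bool)
    (n : ℕ) : cantorInterval Λ b (n + 1) ⊆ cantorInterval Λ b n := by
  have := sideLen_nonneg h0 (n + 1)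
  have := sideLen_antitone h0 h1 n.le_succ
  intro x hx
  simp only [cantorInterval, mem_Icc, cornerCoord_succ] at hx ⊢
  split_ifs at hx <;> constructor <;> linarith

lemma cantorInterval_antitone (h0 : ∀ n, 0 ≤ Λ n) (h1 : ∀ n, Λ n ≤ 1) (b : ℕ → Bool) :
    Antitone (cantorInterval Λ b) :=
  antitone_nat_of_succ_le (cantorInterval_succ_subset h0 h1 b)

lemma sub_two_mul_sideLen_le_abs_sub {b b' : ℕ → Bool} {n : ℕ} {x y : ℝ}
    (hc : cornerCoord Λ b n = cornerCoord Λ b' n) (hb : b n ≠ b' n)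
    (hx : x ∈ cantorInterval Λ b (n + 1)) (hy : y ∈ cantorInterval Λ b' (n + 1)) :
    sideLen Λ n - 2 * sideLen Λ (n + 1) ≤ |x - y| := by
  simp only [cantorInterval, mem_Icc, cornerCoord_succ, hc] at hx hy
  rcases Bool.eq_false_or_eq_true (b n) with h | h <;>
    rcases Bool.eq_false_or_eq_true (b' n) with h' | h' <;>
    simp only [h, h', ne_eq, not_true_eq_false, Bool.true_eq_false, Bool.false_eq_true,
      not_false_eq_true, if_true, if_false] at hb hx hy ⊢
  · exact le_abs.mpr (Or.inl (by linarith))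
  · exact le_abs.mpr (Or.inr (by linarith))

lemma eq_of_forall_lt_eq_of_abs_sub_lt (h0 : ∀ n, 0 ≤ Λ n) (hlam : ∀ n, Λ n ≤ lam)
    {b b' : ℕ → Bool} {n : ℕ} {x y : ℝ} (hagree : ∀ k < n, b k = b' k)
    (hx : x ∈ cantorInterval Λ b (n + 1)) (hy : y ∈ cantorInterval Λ b' (n + 1))
    (hxy : |x - y| < (1 - 2 * lam) * sideLen Λ n) : b n = b' n := by
  by_contra hb
  have := sub_two_mul_sideLen_le_abs_sub (cornerCoord_congr hagree) hb hx hy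
  linarith [sideLen_succ_le h0 hlam n]

lemma forall_le_eq_of_abs_sub_lt (h0 : ∀ n, 0 ≤ Λ n) (h1 : ∀ n, Λ n ≤ 1)
    (hlam : ∀ n, Λ n ≤ lam) {b b' : ℕ → Bool} {n : ℕ} {x y : ℝ}
    (hx : x ∈ cantorInterval Λ b (n + 1)) (hy : y ∈ cantorInterval Λ b' (n + 1))
    (hxy : |x - y| < (1 - 2 * lam) * sideLen Λ n) : ∀ k ≤ n, b k = b' k := by
  have hlam2 : 0 ≤ 1 - 2 * lam := by nlinarith [abs_nonneg (x - y), sideLen_nonneg h0 n]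
  intro k hk
  induction k using Nat.strong_induction_on with
  | _ k ih =>
    refine eq_of_forall_lt_eq_of_abs_sub_lt h0 hlam (fun i hi => ih i hi (by omega))
      (cantorInterval_antitone h0 h1 b (by omega) hx)
      (cantorInterval_antitone h0 h1 b' (by omega) hy) (hxy.trans_le ?_)
    exact mul_le_mul_of_nonneg_left (sideLen_antitone h0 h1 hk) hlam2

lemma cSquare_congr {w w' : ℕ → Bool × Bool} {n : ℕ} (h : ∀ k < n, w k = w' k) :
    cSquare Λ w n = cSquare Λ w' n := by
  rw [cSquare_eq_reProdIm, cSquare_eq_reProdIm, cantorInterval, cantorInterval, cantorInterval,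
    cantorInterval, cornerCoord_congr fun k hk => congrArg Prod.fst (h k hk),
    cornerCoord_congr fun k hk => congrArg Prod.snd (h k hk)]

lemma cSquare_antitone (h0 : ∀ n, 0 ≤ Λ n) (h1 : ∀ n, Λ n ≤ 1) (w : ℕ → Bool × Bool) :
    Antitone (cSquare Λ w) := fun m n hmn z hz => by
  rw [cSquare_eq_reProdIm] at hz ⊢
  exact ⟨cantorInterval_antitone h0 h1 _ hmn hz.1, cantorInterval_antitone h0 h1 _ hmn hz.2⟩

lemma isCompact_cSquare (w : ℕ → Bool × Bool) (n : ℕ) : IsCompact (cSquare Λ w n) := by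
  rw [cSquare_eq_reProdIm]
  exact isCompact_Icc.reProdIm isCompact_Icc

lemma finite_genSq (Λ : ℕ → ℝ) (n : ℕ) : (genSq Λ n).Finite := by
  refine (Set.finite_range fun v : Fin n → Bool × Bool =>
    cSquare Λ (fun k => if h : k < n then v ⟨k, h⟩ else (false, false)) n).subset ?_
  rintro Q ⟨w, rfl⟩
  exact ⟨fun k => w k, cSquare_congr fun k hk => by simp [hk]⟩

lemma isClosed_cantorK (Λ : ℕ → ℝ) : IsClosed (cantorK Λ) := by
  refine isClosed_iInter fun n => ?_
  have : ⋃ w, cSquare Λ w n = ⋃ Q ∈ genSq Λ n, Q := by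
    ext z
    simp [genSq]
  rw [this]
  exact (finite_genSq Λ n).isClosed_biUnion fun Q ⟨w, hQ⟩ => hQ ▸ (isCompact_cSquare w n).isClosed

lemma cSquare_eq_of_dist_lt (h0 : ∀ n, 0 ≤ Λ n) (h1 : ∀ n, Λ n ≤ 1) (hlam : ∀ n, Λ n ≤ lam)
    {w w' : ℕ → Bool × Bool} {n : ℕ} {z z' : ℂ} (hz : z ∈ cSquare Λ w (n + 1))
    (hz' : z' ∈ cSquare Λ w' (n + 1)) (hzz' : dist z z' < (1 - 2 * lam) * sideLen Λ n) :
    cSquare Λ w (n + 1) = cSquare Λ w' (n + 1) := by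
  rw [cSquare_eq_reProdIm] at hz hz'
  have hre : |z.re - z'.re| < (1 - 2 * lam) * sideLen Λ n :=
    (Complex.sub_re z z' ▸ Complex.abs_re_le_norm (z - z')).trans_lt (dist_eq_norm z z' ▸ hzz')
  have him : |z.im - z'.im| < (1 - 2 * lam) * sideLen Λ n :=
    (Complex.sub_im z z' ▸ Complex.abs_im_le_norm (z - z')).trans_lt (dist_eq_norm z z' ▸ hzz')
  exact cSquare_congr fun k hk => Prod.ext
    (forall_le_eq_of_abs_sub_lt h0 h1 hlam hz.1 hz'.1 hre k (Nat.lt_succ_iff.mp hk))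
    (forall_le_eq_of_abs_sub_lt h0 h1 hlam hz.2 hz'.2 him k (Nat.lt_succ_iff.mp hk))

lemma cSquare_eq_of_not_disjoint (hpos : ∀ n, 0 < Λ n) (hlam : ∀ n, Λ n ≤ lam) (hlam2 : lam < 1 / 2)
    {w w' : ℕ → Bool × Bool} {n : ℕ} (h : ¬Disjoint (cSquare Λ w n) (cSquare Λ w' n)) :
    cSquare Λ w n = cSquare Λ w' n := by
  cases n with
  | zero => exact cSquare_congr fun k hk => absurd hk k.not_lt_zero
  | succ n =>
    obtain ⟨z, hz, hz'⟩ := not_disjoint_iff.mp h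
    refine cSquare_eq_of_dist_lt (fun n => (hpos n).le) (fun n => (hlam n).trans (by linarith))
      hlam hz hz' ?_
    rw [dist_self]
    exact mul_pos (by linarith) (Finset.prod_pos fun k _ => hpos k)

lemma cSquare_subset_or_subset_or_disjoint (hpos : ∀ n, 0 < Λ n) (hlam : ∀ n, Λ n ≤ lam)
    (hlam2 : lam < 1 / 2) (u v : ℕ → Bool × Bool) (l m : ℕ) :
    cSquare Λ u l ⊆ cSquare Λ v m ∨ cSquare Λ v m ⊆ cSquare Λ u l ∨
      Disjoint (cSquare Λ u l) (cSquare Λ v m) := by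
  have hanti := fun w => cSquare_antitone (fun n => (hpos n).le)
    (fun n => (hlam n).trans (by linarith : lam ≤ 1)) (Λ := Λ) w
  by_cases hd : Disjoint (cSquare Λ u l) (cSquare Λ v m)
  · exact .inr (.inr hd)
  rcases le_total m l with hml | hlm
  · refine .inl ((hanti u hml).trans (cSquare_eq_of_not_disjoint hpos hlam hlam2 ?_).le)
    exact fun hd' => hd (hd'.mono_left (hanti u hml))
  · refine .inr (.inl ((hanti v hlm).trans (cSquare_eq_of_not_disjoint hpos hlam hlam2 ?_).le))
    exact fun hd' => hd (hd'.symm.mono_right (hanti v hlm))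

lemma exists_cSquare_superset_ball_inter_cantorK (h0 : ∀ n, 0 ≤ Λ n) (h1 : ∀ n, Λ n ≤ 1)
    (hlam : ∀ n, Λ n ≤ lam) {x : ℂ} {ρ : ℝ} {k : ℕ}
    (hρ : 2 * ρ ≤ (1 - 2 * lam) * sideLen Λ k) :
    ∃ v, ball x ρ ∩ cantorK Λ ⊆ cSquare Λ v (k + 1) := by
  rcases (ball x ρ ∩ cantorK Λ).eq_empty_or_nonempty with he | ⟨y, hyB, hyK⟩
  · exact ⟨fun _ => (false, false), he ▸ empty_subset _⟩
  obtain ⟨v, hv⟩ := mem_iUnion.mp (mem_iInter.mp hyK (k + 1))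
  refine ⟨v, fun z ⟨hzB, hzK⟩ => ?_⟩
  obtain ⟨u, hu⟩ := mem_iUnion.mp (mem_iInter.mp hzK (k + 1))
  have hzy : dist z y < (1 - 2 * lam) * sideLen Λ k := by
    linarith [dist_triangle_right z y x, mem_ball.mp hzB, mem_ball.mp hyB]
  rwa [← cSquare_eq_of_dist_lt h0 h1 hlam hu hv hzy]

theorem measure_ball_le_of_measure_cSquare_le (h4 : ∀ n, 1 / 4 ≤ Λ n) (hlam : ∀ n, Λ n ≤ lam)
    {μ ν : Measure ℂ}
    (hμQ : ∀ w n, μ (cSquare Λ w n) = (4 : ℝ≥0∞)⁻¹ ^ n) (hμK : μ (cantorK Λ)ᶜ = 0) (hνμ : ν ≪ μ)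
    {C : ℝ≥0∞} {s : ℝ} (hs : 0 ≤ s) (hν : ∀ w n, ν (cSquare Λ w n) ≤ C * μ (cSquare Λ w n) ^ s)
    (x : ℂ) {ρ : ℝ} (hρ : 0 < ρ) (hρ' : ρ < (1 - 2 * lam) / 2) :
    ν (ball x ρ) ≤ C * ENNReal.ofReal (2 / (1 - 2 * lam)) ^ s * ENNReal.ofReal ρ ^ s := by
  have hgap : 0 < 1 - 2 * lam := by linarith
  have h0 : ∀ n, 0 ≤ Λ n := fun n => by linarith [h4 n]
  have h1 : ∀ n, Λ n ≤ 1 := fun n => by linarith [hlam n]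
  have hr : 2 / (1 - 2 * lam) * ρ < 1 := by rw [div_mul_eq_mul_div, div_lt_one hgap]; linarith
  obtain ⟨k, hk, hrk⟩ := exists_sideLen_succ_le_lt h0 hlam (by linarith) (by positivity) hr
  obtain ⟨v, hv⟩ := exists_cSquare_superset_ball_inter_cantorK h0 h1 hlam (x := x) (ρ := ρ) (k := k)
    (by rw [div_mul_eq_mul_div, div_lt_iff₀ hgap] at hrk; linarith)
  have hμv : μ (cSquare Λ v (k + 1)) ≤ ENNReal.ofReal (2 / (1 - 2 * lam) * ρ) := by
    rw [hμQ, ← ENNReal.ofReal_ofNat, ← ENNReal.ofReal_inv_of_pos (by norm_num),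
      ← ENNReal.ofReal_pow (by norm_num)]
    exact ENNReal.ofReal_le_ofReal ((inv_four_pow_le_sideLen h4 _).trans hk)
  calc ν (ball x ρ) ≤ ν (cSquare Λ v (k + 1)) :=
        measure_mono_ae <| ae_le_set.mpr <| hνμ <| measure_mono_null
          (fun z hz hzK => hz.2 (hv ⟨hz.1, hzK⟩)) hμK
    _ ≤ C * ENNReal.ofReal (2 / (1 - 2 * lam) * ρ) ^ s := (hν v _).trans (by gcongr)
    _ = C * ENNReal.ofReal (2 / (1 - 2 * lam)) ^ s * ENNReal.ofReal ρ ^ s := by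
        rw [ENNReal.ofReal_mul (by positivity), ENNReal.mul_rpow_of_nonneg _ _ hs, mul_assoc]

end CantorGeometry

theorem IsStoppingTree.le_dimH_iInter_levelUnion {Λ : ℕ → ℝ} {lam : ℝ}
    (h4 : ∀ n, 1 / 4 ≤ Λ n) (hlam : ∀ n, Λ n ≤ lam) (hlam2 : lam < 1 / 2)
    {μ : Measure ℂ} [IsProbabilityMeasure μ]
    (hμQ : ∀ w n, μ (cSquare Λ w n) = (4 : ℝ≥0∞)⁻¹ ^ n) (hμK : μ (cantorK Λ)ᶜ = 0)
    {G : ℕ → Finset (Set ℂ)} {ε c : ℝ≥0∞} (hG : IsStoppingTree μ G ε c)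
    (hGD : ∀ n, ∀ P ∈ G n, ∃ m w, P = cSquare Λ w m) (hG₀ : μ (levelUnion G 0) = 1)
    (hc₀ : c ≠ 0) (hc : c ≤ 1) {s : ℝ} (hs₀ : 0 < s) (hs : s ≤ 1) (hεc : ε ^ (1 - s) ≤ c) :
    ENNReal.ofReal s ≤ dimH (⋂ n, levelUnion G n) := by
  have hpos : ∀ n, 0 < Λ n := fun n => by linarith [h4 n]
  refine le_dimH_iInter_of_measure_ball_le (ν := frostmanMeasure μ G)
    (C := c⁻¹ * ENNReal.ofReal (2 / (1 - 2 * lam)) ^ s) (r₀ := (1 - 2 * lam) / 2)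
    (fun n => (G n).isCompact_biUnion fun P hP => ?_) (antitone_nat_of_succ_le fun n => ?_)
    (fun n => ((hG.frostmanMeasure_levelUnion hc₀ n).trans hG₀).ge) hs₀
    (ENNReal.mul_ne_top (ENNReal.inv_ne_top.mpr hc₀)
      (ENNReal.rpow_ne_top_of_nonneg hs₀.le ENNReal.ofReal_ne_top))
    (by linarith) fun n x ρ hρ hρ' => ?_
  · obtain ⟨m, w, rfl⟩ := hGD n P hP
    exact isCompact_cSquare w m
  · refine iUnion₂_subset fun R hR => ?_
    obtain ⟨P, hP, hRP⟩ := hG.exists_parent n R hR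
    exact hRP.trans (subset_iUnion₂ (s := fun P _ => P) P hP)
  · refine measure_ball_le_of_measure_cSquare_le h4 hlam hμQ hμK
      (hG.frostmanMeasure_absolutelyContinuous n) hs₀.le (fun w k => ?_) x hρ hρ'
    refine hG.frostmanMeasure_le_rpow_of_nested hc₀ hc hs hεc (fun m P hP => ?_) n
    obtain ⟨l, u, rfl⟩ := hGD m P hP
    exact cSquare_subset_or_subset_or_disjoint hpos hlam hlam2 u w l k

theorem one_sub_log_div_log_le_dimH_of_lt (Λ : ℕ → ℝ) (lam : ℝ) (hlam : lam < 1 / 2)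
    (hΛ : ∀ n, 1 / 4 ≤ Λ n ∧ Λ n ≤ lam)
    (μ : Measure ℂ) [IsProbabilityMeasure μ]
    (hμK : μ (cantorK Λ) = 1)
    (hμQ : ∀ (w : ℕ → Bool × Bool) (n : ℕ), μ (cSquare Λ w n) = (4 : ℝ≥0∞)⁻¹ ^ n)
    (ε c : ℝ) (hε : 0 < ε) (hc : c < 1)
    (F : ℕ → Set (Set ℂ))
    (hFD : ∀ n, ∀ Q ∈ F n, ∃ (m : ℕ) (w : ℕ → Bool × Bool), Q = cSquare Λ w m)
    (hdisj : ∀ n, (F n).PairwiseDisjoint id)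
    (hF0 : F 0 = {cSquare Λ (fun _ => (false, false)) 0})
    (hb : ∀ n, ∀ Q ∈ F (n + 1), ∃ Q' ∈ F n, Q ⊆ Q' ∧ μ Q ≤ ENNReal.ofReal ε * μ Q')
    (hc' : ∀ n, ∀ Q ∈ F n,
      ENNReal.ofReal c * μ Q ≤ ∑' R : {R : Set ℂ // R ∈ F (n + 1) ∧ R ⊆ Q}, μ R)
    {c' : ℝ} (hεc' : ε < c') (hc'c : c' < c) :
    ENNReal.ofReal (1 - Real.log c' / Real.log ε) ≤ dimH (⋂ n, ⋃ Q ∈ F n, Q) := by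
  have hc'₀ : 0 < c' := hε.trans hεc'
  have hlogε : Real.log ε < 0 := Real.log_neg hε (by linarith)
  have hratio : 0 < Real.log c' / Real.log ε :=
    div_pos_of_neg_of_neg (Real.log_neg hc'₀ (hc'c.trans hc)) hlogε
  have hratio₁ : Real.log c' / Real.log ε < 1 :=
    (div_lt_one_of_neg hlogε).mpr (Real.log_lt_log hε hεc')
  have hεc's : ENNReal.ofReal ε ^ (1 - (1 - Real.log c' / Real.log ε)) = ENNReal.ofReal c' := by
    rw [ENNReal.ofReal_rpow_of_pos hε, sub_sub_cancel, Real.rpow_def_of_pos hε,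
      mul_div_cancel₀ _ hlogε.ne, Real.exp_log hc'₀]
  have hFμ : ∀ n, ∀ Q ∈ F n, MeasurableSet Q ∧ μ Q ≠ 0 := fun n Q hQ => by
    obtain ⟨m, w, rfl⟩ := hFD n Q hQ
    exact ⟨(isCompact_cSquare w m).isClosed.measurableSet, by simp [hμQ]⟩
  obtain ⟨G, hG, hGF, hG₀⟩ := exists_isStoppingTree (fun n Q hQ => (hFμ n Q hQ).1)
    (fun n Q hQ => (hFμ n Q hQ).2) hdisj (hF0 ▸ finite_singleton _)
    (measure_le_pow_of_forall_exists_superset (fun Q _ => prob_le_one) hb) hc'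
    ((ENNReal.ofReal_lt_ofReal_iff (hc'₀.trans hc'c)).mpr hc'c)
  have hL₀ : levelUnion G 0 = cSquare Λ (fun _ => (false, false)) 0 := by
    rw [levelUnion, ← Finset.set_biUnion_coe, hG₀, hF0, biUnion_singleton]
  refine (hG.le_dimH_iInter_levelUnion (fun n => (hΛ n).1) (fun n => (hΛ n).2) hlam hμQ
      ((prob_compl_eq_zero_iff (isClosed_cantorK Λ).measurableSet).mpr hμK)
      (fun n P hP => hFD n P (hGF n P hP)) (by rw [hL₀, hμQ, pow_zero])
      (ENNReal.ofReal_pos.mpr hc'₀).ne' (ENNReal.ofReal_le_one.mpr (by linarith)) (by linarith)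
      (by linarith) hεc's.le).trans
    (dimH_mono (iInter_mono fun n => iUnion₂_subset fun P hP =>
      subset_iUnion₂ (s := fun Q _ => Q) P (hGF n P hP)))

/-- Hungerford's lemma: under the stopping-time conditions (a), (b), (c), the set
`E = ⋂ₙ ⋃_{Q ∈ ℱₙ} Q` has Hausdorff dimension at least `1 - log c / log ε`. -/
theorem hungerford (Λ : ℕ → ℝ) (lam : ℝ) (hlam : lam < 1 / 2)
    (hΛ : ∀ n, 1 / 4 ≤ Λ n ∧ Λ n ≤ lam)
    (μ : Measure ℂ) [IsProbabilityMeasure μ]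
    (hμK : μ (cantorK Λ) = 1)
    (hμQ : ∀ (w : ℕ → Bool × Bool) (n : ℕ), μ (cSquare Λ w n) = (4 : ℝ≥0∞)⁻¹ ^ n)
    (ε c : ℝ) (hε : 0 < ε) (hεc : ε < c) (hc : c < 1)
    (F : ℕ → Set (Set ℂ))
    (hFD : ∀ n, ∀ Q ∈ F n, ∃ (m : ℕ) (w : ℕ → Bool × Bool), Q = cSquare Λ w m)
    (hdisj : ∀ n, (F n).PairwiseDisjoint id)
    (hF0 : F 0 = {cSquare Λ (fun _ => (false, false)) 0})
    (hb : ∀ n, ∀ Q ∈ F (n + 1), ∃ Q' ∈ F n, Q ⊆ Q' ∧ μ Q ≤ ENNReal.ofReal ε * μ Q')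
    (hc' : ∀ n, ∀ Q ∈ F n,
      ENNReal.ofReal c * μ Q ≤ ∑' R : {R : Set ℂ // R ∈ F (n + 1) ∧ R ⊆ Q}, μ R) :
    ENNReal.ofReal (1 - Real.log c / Real.log ε) ≤ dimH (⋂ n, ⋃ Q ∈ F n, Q) := by
  have hlim : Tendsto (fun c' => ENNReal.ofReal (1 - Real.log c' / Real.log ε)) (𝓝[<] c)
      (𝓝 (ENNReal.ofReal (1 - Real.log c / Real.log ε))) :=
    (ENNReal.continuous_ofReal.continuousAt.comp (continuousAt_const.sub
      ((Real.continuousAt_log (hε.trans hεc).ne').div_const _))).tendsto.mono_left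
      nhdsWithin_le_nhds
  exact le_of_tendsto hlim (eventually_of_mem (Ioo_mem_nhdsLT hεc) fun c' hc'mem =>
    one_sub_log_div_log_le_dimH_of_lt Λ lam hlam hΛ μ hμK hμQ ε c hε hc F hFD hdisj hF0 hb hc'
      hc'mem.1 hc'mem.2)
end
end

section
/- Let O = {x ∈ ℝ^d : 0 ≤ x_1 ≤ x_2 ≤ ⋯ ≤ x_d}. Then for any two nonzero vectors u, v ∈ O, the angle between u and v is at most arccos(d^{−1/2}), i.e. ⟨u,v⟩ ≥ d^{−1/2} |u||v|, and this bound is attained. -/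
/-!
For nonnegative, similarly ordered `u` and `v` with common largest coordinate `u_j`, `v_j`, we have
`‖u‖² ≤ u_j ∑ uᵢ`, `‖v‖² ≤ v_j ∑ vᵢ`, `u_j v_j ≤ ⟪u, v⟫`, and Chebyshev's sum inequality
`(∑ uᵢ)(∑ vᵢ) ≤ d ⟪u, v⟫`. Multiplying gives `‖u‖² ‖v‖² ≤ d ⟪u, v⟫²`. Equality holds for
`u = (1, …, 1)` and `v = e_d`.
-/

open Finset

theorem Monovary.sum_sq_mul_sum_sq_le_card_mul_sq_sum_mul {ι : Type*} [Fintype ι]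
    {f g : ι → ℝ} (hf : 0 ≤ f) (hg : 0 ≤ g) (hfg : Monovary f g) {j : ι}
    (hfj : ∀ i, f i ≤ f j) (hgj : ∀ i, g i ≤ g j) :
    (∑ i, f i ^ 2) * ∑ i, g i ^ 2 ≤ Fintype.card ι * (∑ i, f i * g i) ^ 2 := by
  have sum_sq_le {h : ι → ℝ} (hh : 0 ≤ h) (hhj : ∀ i, h i ≤ h j) :
      ∑ i, h i ^ 2 ≤ h j * ∑ i, h i := by
    rw [mul_sum]
    exact sum_le_sum fun i _ => by rw [sq]; exact mul_le_mul_of_nonneg_right (hhj i) (hh i)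
  have hjj : f j * g j ≤ ∑ i, f i * g i :=
    single_le_sum (fun i _ => mul_nonneg (hf i) (hg i)) (mem_univ j)
  calc (∑ i, f i ^ 2) * ∑ i, g i ^ 2
      ≤ (f j * ∑ i, f i) * (g j * ∑ i, g i) :=
        mul_le_mul (sum_sq_le hf hfj) (sum_sq_le hg hgj) (sum_nonneg fun i _ => sq_nonneg _)
          (mul_nonneg (hf j) (sum_nonneg fun i _ => hf i))
    _ = (f j * g j) * ((∑ i, f i) * ∑ i, g i) := by ring
    _ ≤ (∑ i, f i * g i) * (Fintype.card ι * ∑ i, f i * g i) :=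
        mul_le_mul hjj hfg.sum_mul_sum_le_card_mul_sum
          (mul_nonneg (sum_nonneg fun i _ => hf i) (sum_nonneg fun i _ => hg i))
          (sum_nonneg fun i _ => mul_nonneg (hf i) (hg i))
    _ = Fintype.card ι * (∑ i, f i * g i) ^ 2 := by ring

theorem EuclideanSpace.norm_mul_norm_le_sqrt_card_mul_inner {ι : Type*} [Fintype ι]
    {u v : EuclideanSpace ℝ ι} (hu : ∀ i, 0 ≤ u i) (hv : ∀ i, 0 ≤ v i) (huv : Monovary u v)
    {j : ι} (huj : ∀ i, u i ≤ u j) (hvj : ∀ i, v i ≤ v j) :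
    ‖u‖ * ‖v‖ ≤ √(Fintype.card ι) * inner ℝ u v := by
  have hinner : inner ℝ u v = ∑ i, u i * v i := by simp [PiLp.inner_apply, mul_comm]
  have hnorm_sq (w : EuclideanSpace ℝ ι) : ‖w‖ ^ 2 = ∑ i, w i ^ 2 := by
    simp [EuclideanSpace.norm_sq_eq]
  have hinner_nonneg : 0 ≤ inner ℝ u v :=
    hinner ▸ sum_nonneg fun i _ => mul_nonneg (hu i) (hv i)
  rw [← pow_le_pow_iff_left₀ (by positivity) (by positivity) two_ne_zero, mul_pow, mul_pow,
    Real.sq_sqrt (Nat.cast_nonneg _), hnorm_sq, hnorm_sq, hinner]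
  exact huv.sum_sq_mul_sum_sq_le_card_mul_sq_sum_mul hu hv huj hvj

theorem Pi.single_monotone_of_isMax {ι α : Type*} [PartialOrder ι] [DecidableEq ι] [Preorder α]
    [Zero α] {j : ι} (hj : IsMax j) {a : α} (ha : 0 ≤ a) : Monotone (Pi.single j a) := by
  intro i i' hii'
  by_cases hi : i = j
  · subst hi
    rw [(hj.eq_of_le hii').symm]
  · by_cases hi' : i' = j
    · simpa [hi, hi'] using ha
    · simp [hi, hi']

/-- In the region `O = {0 ≤ x₁ ≤ x₂ ≤ ⋯ ≤ x_d} ⊆ ℝ^d`, the angle between any two nonzero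
vectors is at most `arccos(d^{-1/2})`, i.e. `⟨u,v⟩ ≥ d^{-1/2}|u||v|`, and the bound is
attained. -/
theorem region_angle_bound (d : ℕ) (hd : 1 ≤ d)
    (O : Set (EuclideanSpace ℝ (Fin d)))
    (hO : O = {x : EuclideanSpace ℝ (Fin d) |
      (∀ i, 0 ≤ x i) ∧ ∀ i j : Fin d, i ≤ j → x i ≤ x j}) :
    (∀ u ∈ O, ∀ v ∈ O, u ≠ 0 → v ≠ 0 →
      (Real.sqrt d)⁻¹ * (‖u‖ * ‖v‖) ≤ (inner ℝ u v : ℝ)) ∧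
    (∃ u ∈ O, ∃ v ∈ O, u ≠ 0 ∧ v ≠ 0 ∧
      (inner ℝ u v : ℝ) = (Real.sqrt d)⁻¹ * (‖u‖ * ‖v‖)) := by
  subst hO
  obtain ⟨n, rfl⟩ : ∃ n, d = n + 1 := ⟨d - 1, by omega⟩
  refine ⟨fun u ⟨hu, hu_mono⟩ v ⟨hv, hv_mono⟩ _ _ => ?_, ?_⟩
  · rw [inv_mul_le_iff₀ (by positivity)]
    simpa using EuclideanSpace.norm_mul_norm_le_sqrt_card_mul_inner hu hv
      (Monotone.monovary (fun i j h => hu_mono i j h) (fun i j h => hv_mono i j h))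
      (fun i => hu_mono _ _ (Fin.le_last i)) (fun i => hv_mono _ _ (Fin.le_last i))
  · set u : EuclideanSpace ℝ (Fin (n + 1)) := WithLp.toLp 2 fun _ => 1
    set v : EuclideanSpace ℝ (Fin (n + 1)) := EuclideanSpace.single (Fin.last n) 1
    have hu_norm : ‖u‖ = √(n + 1 : ℕ) := by simp [u, EuclideanSpace.norm_eq]
    have hv_norm : ‖v‖ = 1 := by simp [v]
    have huv : inner ℝ u v = 1 := by simp [u, v, EuclideanSpace.inner_single_right]
    refine ⟨u, ⟨fun _ => zero_le_one, fun _ _ _ => le_rfl⟩,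
      v, ⟨fun i => by simp [v, apply_ite],
        fun i j hij => Pi.single_monotone_of_isMax (fun _ _ => Fin.le_last _) zero_le_one hij⟩,
      norm_ne_zero_iff.mp (by rw [hu_norm]; positivity),
      norm_ne_zero_iff.mp (by rw [hv_norm]; exact one_ne_zero), ?_⟩
    rw [huv, hu_norm, hv_norm, mul_one, inv_mul_cancel₀ (by positivity)]
end
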